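/- Let n ≥ 2m and let Q : 𝔽₂ⁿ → 𝔽₂ be Q(z) = ∑_{j=1}^m z_{2j−1} z_{2j}, and set f(z) = (−1)^{Q(z)}. Then for every k ≥ 0, the k-th Fourier weight of f equals 2^{−m} · C(2m, k): that is, ∑_{S ⊆ [n], |S| = k} |f̂(S)| = 2^{−m} · binom(2m, k). -/

import Mathlib

/-- The Fourier coefficient `f̂(S) = 2^{-n} ∑_{x ∈ 𝔽₂ⁿ} f(x) (-1)^{x_S}`,
where `x_S = ∑_{i ∈ S} x_i ∈ 𝔽₂`. -/
noncomputable def fCoeff {n : ℕ} (f : (Fin n → ZMod 2) → ℝ) (A : Finset (Fin n)) : ℝ :=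
  (1 / 2 ^ n) * ∑ x : Fin n → ZMod 2, f x * (-1 : ℝ) ^ (∑ i ∈ A, x i).val

/-! Write `χ a = (-1) ^ a` on `𝔽₂`. Coordinates off the `2m` paired ones do not occur in `Q`, so
if `S` contains one of them, flipping it negates every summand of `f̂(S)` and `f̂(S) = 0`. If `S` lies
inside the paired coordinates, the linear form `x ↦ x_S` is the polar form `B(t, ·)` of `Q` for the
vector `t` obtained from the indicator of `S` by swapping the two coordinates of each pair, so the
substitution `x ↦ x + t` gives `f̂(∅) = ±f̂(S)`. All `2^{2m}` such coefficients thus have the same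
absolute value, and Parseval (`∑ f̂(S)² = 1` since `f² = 1`) makes it `2^{-m}`. -/

open Finset

noncomputable def signChar : AddChar (ZMod 2) ℝ := AddChar.zmodChar 2 neg_one_sq

namespace signChar

lemma apply (a : ZMod 2) : signChar a = (-1) ^ a.val := rfl

lemma apply_one : signChar 1 = -1 := by norm_num [apply, ZMod.val_one]

lemma one_add_eq_zero_of_ne_zero {a : ZMod 2} (ha : a ≠ 0) : 1 + signChar a = 0 := by
  fin_cases a
  · exact absurd rfl ha
  · exact (congrArg _ apply_one).trans (add_neg_cancel 1)

lemma abs_apply (a : ZMod 2) : |signChar a| = 1 := by simp [apply, abs_pow]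

lemma mul_self (a : ZMod 2) : signChar a * signChar a = 1 := by
  rw [← AddChar.map_add_eq_mul, CharTwo.add_self_eq_zero, AddChar.map_zero_eq_one]

lemma map_sum {ι : Type*} (s : Finset ι) (d : ι → ZMod 2) :
    signChar (∑ i ∈ s, d i) = ∏ i ∈ s, signChar (d i) := by
  classical
  induction s using Finset.induction_on with
  | empty => simp
  | insert i s hi ih => rw [sum_insert hi, prod_insert hi, AddChar.map_add_eq_mul, ih]

end signChar

lemma sum_powerset_signChar_sum {n : ℕ} (d : Fin n → ZMod 2) :
    ∑ S ∈ (univ : Finset (Fin n)).powerset, signChar (∑ i ∈ S, d i)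
      = if d = 0 then 2 ^ n else 0 := by
  simp_rw [signChar.map_sum, ← prod_one_add]
  split_ifs with hd
  · simp [hd, one_add_one_eq_two]
  · obtain ⟨i, hi⟩ := Function.ne_iff.mp hd
    exact prod_eq_zero (mem_univ i) (signChar.one_add_eq_zero_of_ne_zero hi)

theorem sum_powerset_fCoeff_sq {n : ℕ} (f : (Fin n → ZMod 2) → ℝ) :
    ∑ S ∈ (univ : Finset (Fin n)).powerset, fCoeff f S ^ 2 = (∑ x, f x ^ 2) / 2 ^ n := by
  have hprod (S : Finset (Fin n)) (x y : Fin n → ZMod 2) :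
      signChar (∑ i ∈ S, x i) * signChar (∑ i ∈ S, y i) = signChar (∑ i ∈ S, (x - y) i) := by
    rw [← AddChar.map_add_eq_mul, ← sum_add_distrib]
    simp only [Pi.sub_apply, sub_eq_add_neg, ZMod.neg_eq_self_mod_two]
  calc ∑ S ∈ univ.powerset, fCoeff f S ^ 2
      = ∑ S ∈ (univ : Finset (Fin n)).powerset, (1 / 2 ^ n) ^ 2 *
          ∑ x, ∑ y, f x * signChar (∑ i ∈ S, x i) * (f y * signChar (∑ i ∈ S, y i)) := by
        simp_rw [fCoeff, ← signChar.apply, mul_pow, sq, sum_mul_sum]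
    _ = (1 / 2 ^ n) ^ 2 * ∑ x, ∑ y, f x * f y *
          ∑ S ∈ (univ : Finset (Fin n)).powerset, signChar (∑ i ∈ S, (x - y) i) := by
        rw [← mul_sum, sum_comm]
        refine congrArg _ (sum_congr rfl fun x _ => ?_)
        rw [sum_comm]
        refine sum_congr rfl fun y _ => ?_
        rw [mul_sum]
        refine sum_congr rfl fun S _ => ?_
        rw [← hprod]
        ring
    _ = (∑ x, f x ^ 2) / 2 ^ n := by
        simp only [sum_powerset_signChar_sum, sub_eq_zero, mul_ite, mul_zero, sum_ite_eq,
          mem_univ, if_true, ← sum_mul, ← sq]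
        field_simp

section Hyperbolic

variable {n m : ℕ} (e : Fin m ⊕ Fin m ↪ Fin n)

def hyperbolicForm (x : Fin n → ZMod 2) : ZMod 2 :=
  ∑ j, x (e (.inl j)) * x (e (.inr j))

lemma hyperbolicForm_add (x y : Fin n → ZMod 2) :
    hyperbolicForm e (x + y)
      = hyperbolicForm e x + hyperbolicForm e y + ∑ a, y (e a.swap) * x (e a) := by
  simp only [hyperbolicForm, Fintype.sum_sum_type, Sum.swap_inl, Sum.swap_inr, Pi.add_apply,
    ← sum_add_distrib]
  exact sum_congr rfl fun j _ => by ring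

lemma exists_polar_eq_sum {S : Finset (Fin n)} (hS : S ⊆ univ.map e) :
    ∃ t : Fin n → ZMod 2, ∀ x : Fin n → ZMod 2,
      ∑ a : Fin m ⊕ Fin m, t (e a.swap) * x (e a) = ∑ i ∈ S, x i := by
  refine ⟨Function.extend (e ∘ Sum.swap) (fun a => if e a ∈ S then 1 else 0) 0, fun x => ?_⟩
  have hinj : Function.Injective (e ∘ Sum.swap) := e.injective.comp Sum.swap_leftInverse.injective
  simp_rw [← Function.comp_apply (f := e) (g := Sum.swap), hinj.extend_apply, ite_mul, one_mul,
    zero_mul]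
  rw [← sum_map univ e (fun i => if i ∈ S then x i else 0), sum_ite_mem, inter_eq_right.mpr hS]

lemma fCoeff_hyperbolicForm_eq_zero {S : Finset (Fin n)} {i : Fin n} (hiS : i ∈ S)
    (hi : i ∉ univ.map e) : fCoeff (signChar ∘ hyperbolicForm e) S = 0 := by
  set δ : Fin n → ZMod 2 := Pi.single i 1
  set g := fun x : Fin n → ZMod 2 => signChar (hyperbolicForm e x) * signChar (∑ i ∈ S, x i)
  have hflip (x : Fin n → ZMod 2) : g (x + δ) = - g x := by
    have hQ : hyperbolicForm e (x + δ) = hyperbolicForm e x := by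
      have hδ (a : Fin m ⊕ Fin m) : δ (e a) = 0 :=
        Pi.single_eq_of_ne (fun h => hi (mem_map.mpr ⟨a, mem_univ a, h⟩)) 1
      simp only [hyperbolicForm, Pi.add_apply, hδ, add_zero]
    have hS : ∑ i' ∈ S, (x + δ) i' = ∑ i' ∈ S, x i' + 1 := by
      rw [Pi.add_def, sum_add_distrib, sum_pi_single' i 1 S, if_pos hiS]
    simp only [g, hQ, hS, AddChar.map_add_eq_mul, signChar.apply_one]
    ring
  have hsum : ∑ x, g x = 0 := by
    have := Equiv.sum_comp (Equiv.addRight δ) g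
    simp only [Equiv.coe_addRight, hflip, sum_neg_distrib] at this
    linarith
  exact mul_eq_zero_of_right _ hsum

lemma abs_fCoeff_hyperbolicForm_eq_abs_fCoeff_empty {S : Finset (Fin n)}
    (hS : S ⊆ univ.map e) :
    |fCoeff (signChar ∘ hyperbolicForm e) S|
      = |fCoeff (signChar ∘ hyperbolicForm e) ∅| := by
  obtain ⟨t, ht⟩ := exists_polar_eq_sum e hS
  have hshift (x : Fin n → ZMod 2) : signChar (hyperbolicForm e (x + t))
      = signChar (hyperbolicForm e t)
        * (signChar (hyperbolicForm e x) * signChar (∑ i ∈ S, x i)) := by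
    rw [hyperbolicForm_add, ht, AddChar.map_add_eq_mul, AddChar.map_add_eq_mul]
    ring
  have hempty : fCoeff (signChar ∘ hyperbolicForm e) ∅
      = signChar (hyperbolicForm e t) * fCoeff (signChar ∘ hyperbolicForm e) S := by
    simp only [fCoeff, ← signChar.apply, sum_empty, AddChar.map_zero_eq_one, mul_one]
    rw [← Equiv.sum_comp (Equiv.addRight t)]
    simp only [Equiv.coe_addRight, Function.comp_apply, hshift, ← mul_sum]
    ring
  rw [hempty, abs_mul, signChar.abs_apply, one_mul]

lemma sum_powerset_fCoeff_hyperbolicForm_sq :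
    ∑ T ∈ (univ.map e).powerset, fCoeff (signChar ∘ hyperbolicForm e) T ^ 2 = 1 := by
  rw [sum_subset (powerset_mono.mpr (subset_univ (univ.map e))), sum_powerset_fCoeff_sq]
  · simp [sq, signChar.mul_self]
  · intro T _ hT
    obtain ⟨i, hiT, hi⟩ := not_subset.mp (mt mem_powerset.mpr hT)
    rw [fCoeff_hyperbolicForm_eq_zero e hiT hi, sq, zero_mul]

lemma abs_fCoeff_hyperbolicForm_of_subset {S : Finset (Fin n)} (hS : S ⊆ univ.map e) :
    |fCoeff (signChar ∘ hyperbolicForm e) S| = 1 / 2 ^ m := by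
  set c := |fCoeff (signChar ∘ hyperbolicForm e) ∅|
  have hsq (T) (hT : T ∈ (univ.map e).powerset) :
      fCoeff (signChar ∘ hyperbolicForm e) T ^ 2 = c ^ 2 := by
    rw [← sq_abs, abs_fCoeff_hyperbolicForm_eq_abs_fCoeff_empty e (mem_powerset.mp hT)]
  have hc := sum_powerset_fCoeff_hyperbolicForm_sq e
  rw [sum_congr rfl hsq, sum_const, card_powerset, card_map, card_univ, Fintype.card_sum,
    Fintype.card_fin, nsmul_eq_mul, Nat.cast_pow, Nat.cast_two, ← two_mul, pow_mul'] at hc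
  rw [abs_fCoeff_hyperbolicForm_eq_abs_fCoeff_empty e hS,
    ← pow_left_inj₀ (abs_nonneg _) (by positivity) two_ne_zero, div_pow, one_pow,
    eq_div_iff (by positivity), mul_comm, hc]

theorem sum_powersetCard_abs_fCoeff_hyperbolicForm (k : ℕ) :
    ∑ S ∈ powersetCard k (univ : Finset (Fin n)), |fCoeff (signChar ∘ hyperbolicForm e) S|
      = 1 / 2 ^ m * (2 * m).choose k := by
  rw [← sum_subset (powersetCard_mono (subset_univ (univ.map e)))]
  · rw [sum_congr rfl fun S hS =>
        abs_fCoeff_hyperbolicForm_of_subset e (mem_powersetCard.mp hS).1, sum_const,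
      card_powersetCard, card_map, card_univ, Fintype.card_sum, Fintype.card_fin, nsmul_eq_mul,
      two_mul, mul_comm]
  · intro S hS hSe
    have hnot : ¬ S ⊆ univ.map e :=
      fun h => hSe (mem_powersetCard.mpr ⟨h, (mem_powersetCard.mp hS).2⟩)
    obtain ⟨i, hiS, hi⟩ := not_subset.mp hnot
    rw [fCoeff_hyperbolicForm_eq_zero e hiS hi, abs_zero]

end Hyperbolic

def consecutivePairs {n m : ℕ} (hmn : 2 * m ≤ n) : Fin m ⊕ Fin m ↪ Fin n where
  toFun := Sum.elim (fun j => ⟨2 * j, by omega⟩) (fun j => ⟨2 * j + 1, by omega⟩)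
  inj' := by rintro (a | a) (b | b) h <;> simp [Fin.ext_iff] at h ⊢ <;> omega

/-- For `Q(z) = ∑_{j=1}^m z_{2j-1} z_{2j}` on `𝔽₂ⁿ` with `n ≥ 2m` and `f = (-1)^Q`, the
`k`-th Fourier weight of `f` equals `2^{-m} · binom(2m, k)`. -/
theorem fourier_weight_canonical_quadratic (n m : ℕ) (hmn : 2 * m ≤ n)
    (Q : (Fin n → ZMod 2) → ZMod 2)
    (hQ : ∀ z, Q z =
      ∑ j : Fin m,
        z ⟨2 * (j : ℕ), by have := j.isLt; omega⟩ *
        z ⟨2 * (j : ℕ) + 1, by have := j.isLt; omega⟩)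
    (k : ℕ) :
    ∑ S ∈ Finset.powersetCard k (Finset.univ : Finset (Fin n)),
        |fCoeff (fun z => (-1 : ℝ) ^ (Q z).val) S|
      = (1 / 2 ^ m) * (Nat.choose (2 * m) k : ℝ) := by
  obtain rfl : Q = hyperbolicForm (consecutivePairs hmn) := funext hQ
  exact sum_powersetCard_abs_fCoeff_hyperbolicForm (consecutivePairs hmn) k
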